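/- arXiv:2412.04899 — 3 statements merged into one kernel-verified Lean document; each statement's English description precedes it below -/
import Mathlib

section
/- Let f, h : U → ℝ^{d−n} be C¹ maps on an open convex set U ⊆ ℝⁿ, and ψ : U → [0,1] a C¹ function. Assume: Df is L_{Df}-Lipschitz; Dh is L_{Df}-Lipschitz; ψ and Dψ are both Lipschitz with constant at most L; ‖Dψ(y)‖ ≤ L for all y; sup_y |h(y) − f(y)| ≤ ε; and sup_y ‖Dh(y) − Df(y)‖_op ≤ ε. Then the derivative of F(x) = (1−ψ(x)) f(x) + ψ(x) h(x) is Lipschitz with constant 3Lε + L_{Df}: for all y₁, y₂, ‖DF(y₂) − DF(y₁)‖_op ≤ (3Lε + L_{Df}) |y₂ − y₁|. -/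
/-!
By the product rule, `D F = (1 - ψ) • Df + ψ • Dh + Dψ ⊗ (h - f)`. Comparing at `y₂` and `y₁`,
the convex combination of `Df` and `Dh` moves by at most `L_{Df} |y₂ - y₁|`, and each of the
three remaining terms moves by at most `L ε |y₂ - y₁|`: one from `ψ` being `L`-Lipschitz and
`‖Dh - Df‖ ≤ ε`, one from `Dψ` being `L`-Lipschitz and `|h - f| ≤ ε`, and one from
`‖Dψ‖ ≤ L` and `h - f` being `ε`-Lipschitz by the mean value inequality on the convex set `U`.
-/

open Set

section Interpolation

variable {E F : Type*} [NormedAddCommGroup E] [NormedSpace ℝ E]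
  [NormedAddCommGroup F] [NormedSpace ℝ F]

theorem fderivWithin_interpolation {U : Set E} {y : E} {f h : E → F} {ψ : E → ℝ}
    (hU : UniqueDiffWithinAt ℝ U y) (hf : DifferentiableWithinAt ℝ f U y)
    (hh : DifferentiableWithinAt ℝ h U y) (hψ : DifferentiableWithinAt ℝ ψ U y) :
    fderivWithin ℝ (fun x => (1 - ψ x) • f x + ψ x • h x) U y =
      (1 - ψ y) • fderivWithin ℝ f U y + ψ y • fderivWithin ℝ h U y
        + (fderivWithin ℝ ψ U y).smulRight (h y - f y) := by
  have hderiv : HasFDerivWithinAt (fun x => (1 - ψ x) • f x + ψ x • h x)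
      ((1 - ψ y) • fderivWithin ℝ f U y + ((0 : E →L[ℝ] ℝ) - fderivWithin ℝ ψ U y).smulRight (f y)
        + (ψ y • fderivWithin ℝ h U y + (fderivWithin ℝ ψ U y).smulRight (h y))) U y :=
    (((hasFDerivWithinAt_const (1 : ℝ) y U).sub hψ.hasFDerivWithinAt).smul
      hf.hasFDerivWithinAt).add (hψ.hasFDerivWithinAt.smul hh.hasFDerivWithinAt)
  rw [hderiv.fderivWithin hU]
  ext x
  simp only [add_apply, smul_apply, sub_apply, ContinuousLinearMap.smulRight_apply,
    zero_apply]
  module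

theorem norm_sub_sub_sub_le_of_norm_fderivWithin_sub_le {U : Set E} {f h : E → F} {ε : ℝ}
    (hU : UniqueDiffOn ℝ U) (hUconv : Convex ℝ U) (hf : DifferentiableOn ℝ f U)
    (hh : DifferentiableOn ℝ h U)
    (hDclose : ∀ y ∈ U, ‖fderivWithin ℝ h U y - fderivWithin ℝ f U y‖ ≤ ε)
    {y₁ y₂ : E} (hy₁ : y₁ ∈ U) (hy₂ : y₂ ∈ U) :
    ‖(h y₂ - f y₂) - (h y₁ - f y₁)‖ ≤ ε * ‖y₂ - y₁‖ := by
  refine hUconv.norm_image_sub_le_of_norm_fderivWithin_le (hh.sub hf) (fun y hy => ?_) hy₁ hy₂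
  rw [fderivWithin_sub (hU y hy) (hh y hy) (hf y hy)]
  exact hDclose y hy

theorem norm_convex_combination_le {a : ℝ} (ha : a ∈ Icc (0 : ℝ) 1) {X Y : F} {K : ℝ}
    (hX : ‖X‖ ≤ K) (hY : ‖Y‖ ≤ K) : ‖(1 - a) • X + a • Y‖ ≤ K := by
  obtain ⟨ha₀, ha₁⟩ := ha
  calc ‖(1 - a) • X + a • Y‖ ≤ (1 - a) * ‖X‖ + a * ‖Y‖ := by
        refine (norm_add_le _ _).trans (add_le_add ?_ ?_) <;>
          rw [norm_smul, Real.norm_of_nonneg (by linarith)]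
    _ ≤ (1 - a) * K + a * K := by gcongr
    _ = K := by ring

theorem interpolation_sub_interpolation (a₁ a₂ : ℝ) (A₁ A₂ B₁ B₂ : E →L[ℝ] F)
    (p₁ p₂ : E →L[ℝ] ℝ) (g₁ g₂ : F) :
    ((1 - a₂) • A₂ + a₂ • B₂ + p₂.smulRight g₂) - ((1 - a₁) • A₁ + a₁ • B₁ + p₁.smulRight g₁) =
      ((1 - a₂) • (A₂ - A₁) + a₂ • (B₂ - B₁)) + (a₂ - a₁) • (B₁ - A₁)
        + (p₂ - p₁).smulRight g₂ + p₁.smulRight (g₂ - g₁) := by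
  ext x
  simp only [add_apply, smul_apply, sub_apply, ContinuousLinearMap.smulRight_apply]
  module

theorem norm_interpolation_sub_interpolation_le {a₁ a₂ : ℝ} (ha₂ : a₂ ∈ Icc (0 : ℝ) 1)
    {A₁ A₂ B₁ B₂ : E →L[ℝ] F} {p₁ p₂ : E →L[ℝ] ℝ} {g₁ g₂ : F} {K : ℝ}
    (hA : ‖A₂ - A₁‖ ≤ K) (hB : ‖B₂ - B₁‖ ≤ K) :
    ‖((1 - a₂) • A₂ + a₂ • B₂ + p₂.smulRight g₂) - ((1 - a₁) • A₁ + a₁ • B₁ + p₁.smulRight g₁)‖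
      ≤ K + |a₂ - a₁| * ‖B₁ - A₁‖ + ‖p₂ - p₁‖ * ‖g₂‖ + ‖p₁‖ * ‖g₂ - g₁‖ := by
  rw [interpolation_sub_interpolation]
  refine norm_add₄_le.trans ?_
  rw [norm_smul, Real.norm_eq_abs, ContinuousLinearMap.norm_smulRight_apply,
    ContinuousLinearMap.norm_smulRight_apply]
  gcongr
  exact norm_convex_combination_le ha₂ hA hB

end Interpolation

/-- The derivative of the interpolation `F = (1-ψ) f + ψ h` is Lipschitz with
constant `3 L ε + L_{Df}`. -/
theorem interpolation_derivative_lipschitz (n d : ℕ) (LDf L ε : ℝ)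
    (U : Set (EuclideanSpace ℝ (Fin n))) (hU : IsOpen U) (hUconv : Convex ℝ U)
    (f h : EuclideanSpace ℝ (Fin n) → EuclideanSpace ℝ (Fin (d - n)))
    (ψ : EuclideanSpace ℝ (Fin n) → ℝ)
    (hf : ContDiffOn ℝ 1 f U) (hh : ContDiffOn ℝ 1 h U) (hψC1 : ContDiffOn ℝ 1 ψ U)
    (hψ01 : ∀ x ∈ U, ψ x ∈ Set.Icc (0 : ℝ) 1)
    (hDf_lip : ∀ y₁ ∈ U, ∀ y₂ ∈ U,
      ‖fderivWithin ℝ f U y₂ - fderivWithin ℝ f U y₁‖ ≤ LDf * ‖y₂ - y₁‖)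
    (hDh_lip : ∀ y₁ ∈ U, ∀ y₂ ∈ U,
      ‖fderivWithin ℝ h U y₂ - fderivWithin ℝ h U y₁‖ ≤ LDf * ‖y₂ - y₁‖)
    (hψ_lip : ∀ y₁ ∈ U, ∀ y₂ ∈ U, |ψ y₂ - ψ y₁| ≤ L * ‖y₂ - y₁‖)
    (hDψ_lip : ∀ y₁ ∈ U, ∀ y₂ ∈ U,
      ‖fderivWithin ℝ ψ U y₂ - fderivWithin ℝ ψ U y₁‖ ≤ L * ‖y₂ - y₁‖)
    (hDψ_bound : ∀ y ∈ U, ‖fderivWithin ℝ ψ U y‖ ≤ L)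
    (hclose : ∀ y ∈ U, ‖h y - f y‖ ≤ ε)
    (hDclose : ∀ y ∈ U, ‖fderivWithin ℝ h U y - fderivWithin ℝ f U y‖ ≤ ε)
    (F : EuclideanSpace ℝ (Fin n) → EuclideanSpace ℝ (Fin (d - n)))
    (hF : ∀ x ∈ U, F x = (1 - ψ x) • f x + ψ x • h x) :
    ∀ y₁ ∈ U, ∀ y₂ ∈ U,
      ‖fderivWithin ℝ F U y₂ - fderivWithin ℝ F U y₁‖ ≤ (3 * L * ε + LDf) * ‖y₂ - y₁‖ := by
  intro y₁ hy₁ y₂ hy₂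
  have hL : 0 ≤ L := (norm_nonneg _).trans (hDψ_bound y₁ hy₁)
  have hfd := hf.differentiableOn one_ne_zero
  have hhd := hh.differentiableOn one_ne_zero
  have hψd := hψC1.differentiableOn one_ne_zero
  have hDF : ∀ y ∈ U, fderivWithin ℝ F U y = (1 - ψ y) • fderivWithin ℝ f U y
      + ψ y • fderivWithin ℝ h U y + (fderivWithin ℝ ψ U y).smulRight (h y - f y) :=
    fun y hy => (fderivWithin_congr' hF hy).trans <|
      fderivWithin_interpolation (hU.uniqueDiffOn y hy) (hfd y hy) (hhd y hy) (hψd y hy)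
  have hdiff_lip := norm_sub_sub_sub_le_of_norm_fderivWithin_sub_le hU.uniqueDiffOn hUconv
    hfd hhd hDclose hy₁ hy₂
  rw [hDF y₂ hy₂, hDF y₁ hy₁]
  refine (norm_interpolation_sub_interpolation_le (hψ01 y₂ hy₂) (hDf_lip y₁ hy₁ y₂ hy₂)
    (hDh_lip y₁ hy₁ y₂ hy₂)).trans ?_
  have hψ_term := mul_le_mul (hψ_lip y₁ hy₁ y₂ hy₂) (hDclose y₁ hy₁) (norm_nonneg _)
    (by positivity)
  have hDψ_term := mul_le_mul (hDψ_lip y₁ hy₁ y₂ hy₂) (hclose y₂ hy₂) (norm_nonneg _)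
    (by positivity)
  have hdiff_term := mul_le_mul (hDψ_bound y₁ hy₁) hdiff_lip (norm_nonneg _) hL
  linarith
end

section
/- Let F : U → ℝ^{d−n} be a C¹ map on an open convex set U ⊆ ℝⁿ whose derivative DF is L-Lipschitz. For y₁, y₂ ∈ U let p₁' = (y₁, F(y₁)) and p₂' = (y₂, F(y₂)) be points of the graph of F, and let Tan_{p₁'} be the affine tangent space of the graph at p₁', i.e. p₁' + {(v, DF(y₁)v) : v ∈ ℝⁿ}. Then the distance from p₂' to Tan_{p₁'} is at most (L/2)|p₂' − p₁'|². -/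
/-!
With `v = y₂ - y₁`, the point `p₁' + (v, DF(y₁) v)` of the tangent space differs from `p₂'` by
`(0, g 1)`, where `g t = F(y₁ + t v) - F y₁ - t DF(y₁) v`. Since `g 0 = 0` and
`|g' t| = |(DF(y₁ + t v) - DF(y₁)) v| ≤ L |v|² t`, comparison with `t ↦ L |v|² t² / 2` gives
`|g 1| ≤ L |v|² / 2`, and `|v| ≤ |p₂' - p₁'|`.
-/

open Set Metric

theorem norm_image_one_le_of_norm_deriv_le_mul {E : Type*} [NormedAddCommGroup E]
    [NormedSpace ℝ E] {g g' : ℝ → E} {C : ℝ} (hg : ContinuousOn g (Icc 0 1))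
    (hg' : ∀ t ∈ Ico (0 : ℝ) 1, HasDerivWithinAt g (g' t) (Ici t) t) (hg₀ : g 0 = 0)
    (bound : ∀ t ∈ Ico (0 : ℝ) 1, ‖g' t‖ ≤ C * t) :
    ‖g 1‖ ≤ C / 2 := by
  have hB : ∀ t : ℝ, HasDerivAt (fun t ↦ C / 2 * t ^ 2) (C * t) t := fun t ↦
    ((hasDerivAt_pow 2 t).const_mul (C / 2)).congr_deriv (by push_cast; ring)
  simpa using image_norm_le_of_norm_deriv_right_le_deriv_boundary hg hg' (by simp [hg₀]) hB
    bound (right_mem_Icc.2 zero_le_one)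

theorem Convex.norm_image_sub_sub_fderiv_le_of_lipschitz {E F : Type*} [NormedAddCommGroup E]
    [NormedSpace ℝ E] [NormedAddCommGroup F] [NormedSpace ℝ F] {s : Set E} (hs : Convex ℝ s)
    {f : E → F} {f' : E → E →L[ℝ] F} (hf : ∀ x ∈ s, HasFDerivWithinAt f (f' x) s x) {L : ℝ}
    {x y : E} (hx : x ∈ s) (hy : y ∈ s) (hlip : ∀ z ∈ s, ‖f' z - f' x‖ ≤ L * ‖z - x‖) :
    ‖f y - f x - f' x (y - x)‖ ≤ L / 2 * ‖y - x‖ ^ 2 := by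
  set γ : ℝ → E := fun t ↦ AffineMap.lineMap x y t
  have hγ : MapsTo γ (Icc 0 1) s := hs.mapsTo_lineMap hx hy
  set g : ℝ → F := fun t ↦ f (γ t) - f x - t • f' x (y - x)
  have hg : ∀ t ∈ Icc (0 : ℝ) 1,
      HasDerivWithinAt g ((f' (γ t) - f' x) (y - x)) (Icc 0 1) t := fun t ht ↦ by
    have hfγ := (hf _ (hγ ht)).comp_hasDerivWithinAt t AffineMap.hasDerivWithinAt_lineMap hγ
    have hlin := (hasDerivWithinAt_id t (Icc 0 1)).smul_const (f' x (y - x))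
    exact ((hfγ.sub_const (f x)).sub hlin).congr_deriv (by rw [one_smul, sub_apply])
  have bound : ∀ t ∈ Ico (0 : ℝ) 1,
      ‖(f' (γ t) - f' x) (y - x)‖ ≤ L * ‖y - x‖ ^ 2 * t := fun t ht ↦
    calc ‖(f' (γ t) - f' x) (y - x)‖ ≤ ‖f' (γ t) - f' x‖ * ‖y - x‖ :=
          ContinuousLinearMap.le_opNorm _ _
      _ ≤ L * ‖γ t - x‖ * ‖y - x‖ := by
        gcongr; exact hlip _ (hγ (Ico_subset_Icc_self ht))
      _ = L * ‖y - x‖ ^ 2 * t := by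
        rw [← vsub_eq_sub (γ t), AffineMap.lineMap_vsub_left, vsub_eq_sub, norm_smul,
          Real.norm_of_nonneg ht.1]
        ring
  have hg₁ := norm_image_one_le_of_norm_deriv_le_mul (fun t ht ↦ (hg t ht).continuousWithinAt)
    (fun t ht ↦ (hg t (Ico_subset_Icc_self ht)).mono_of_mem_nhdsWithin
      (Icc_mem_nhdsGE_of_mem ht)) (by simp [g, γ]) bound
  calc ‖f y - f x - f' x (y - x)‖ = ‖g 1‖ := by simp [g, γ]
    _ ≤ L * ‖y - x‖ ^ 2 / 2 := hg₁
    _ = L / 2 * ‖y - x‖ ^ 2 := by ring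

theorem infDist_graph_le_norm_sub_sub {E F : Type*} [NormedAddCommGroup E] [NormedSpace ℝ E]
    [NormedAddCommGroup F] [NormedSpace ℝ F] (f : E → F) (A : E →L[ℝ] F) (x y : E) :
    infDist (WithLp.toLp 2 (y, f y))
        {z | ∃ v : E, z = WithLp.toLp 2 (x, f x) + WithLp.toLp 2 (v, A v)} ≤
      ‖f y - f x - A (y - x)‖ := by
  have hdiff : WithLp.toLp 2 (y, f y) - (WithLp.toLp 2 (x, f x) + WithLp.toLp 2 (y - x, A (y - x)))
      = WithLp.toLp 2 ((0 : E), f y - f x - A (y - x)) := by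
    apply WithLp.ofLp_injective
    ext <;> simp only [WithLp.ofLp_sub, WithLp.ofLp_add, Prod.fst_sub, Prod.fst_add,
      Prod.snd_sub, Prod.snd_add] <;> abel
  calc _ ≤ dist (WithLp.toLp 2 (y, f y))
        (WithLp.toLp 2 (x, f x) + WithLp.toLp 2 (y - x, A (y - x))) :=
        infDist_le_dist_of_mem (by exact ⟨y - x, rfl⟩)
    _ = ‖f y - f x - A (y - x)‖ := by rw [dist_eq_norm, hdiff, WithLp.norm_toLp_snd]

theorem dist_graph_point_to_affine_tangent_general (n d : ℕ) (L : ℝ)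
    (U : Set (EuclideanSpace ℝ (Fin n))) (hUconv : Convex ℝ U)
    (F : EuclideanSpace ℝ (Fin n) → EuclideanSpace ℝ (Fin (d - n)))
    (hF : ContDiffOn ℝ 1 F U)
    (hDF_lip : ∀ y₁ ∈ U, ∀ y₂ ∈ U,
      ‖fderivWithin ℝ F U y₂ - fderivWithin ℝ F U y₁‖ ≤ L * ‖y₂ - y₁‖)
    (y₁ : EuclideanSpace ℝ (Fin n)) (hy₁ : y₁ ∈ U)
    (y₂ : EuclideanSpace ℝ (Fin n)) (hy₂ : y₂ ∈ U) :
    letI P := WithLp 2 (EuclideanSpace ℝ (Fin n) × EuclideanSpace ℝ (Fin (d - n)))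
    let e := (WithLp.equiv 2 (EuclideanSpace ℝ (Fin n) × EuclideanSpace ℝ (Fin (d - n)))).symm
    let p₁' : P := e (y₁, F y₁)
    let p₂' : P := e (y₂, F y₂)
    let Tan : Set P := {z | ∃ v : EuclideanSpace ℝ (Fin n),
      z = p₁' + e (v, fderivWithin ℝ F U y₁ v)}
    infDist p₂' Tan ≤ L / 2 * ‖p₂' - p₁'‖ ^ 2 := by
  intro e p₁' p₂' Tan
  have hDF : ∀ y ∈ U, HasFDerivWithinAt F (fderivWithin ℝ F U y) U y := fun y hy ↦
    (hF.differentiableOn one_ne_zero y hy).hasFDerivWithinAt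
  calc infDist p₂' Tan ≤ ‖F y₂ - F y₁ - fderivWithin ℝ F U y₁ (y₂ - y₁)‖ :=
        infDist_graph_le_norm_sub_sub F _ y₁ y₂
    _ ≤ L / 2 * ‖y₂ - y₁‖ ^ 2 :=
        hUconv.norm_image_sub_sub_fderiv_le_of_lipschitz hDF hy₁ hy₂ (hDF_lip y₁ hy₁)
    _ ≤ L / 2 * ‖p₂' - p₁'‖ ^ 2 := by
        -- `L` may be negative only if `U` is a singleton, so the degenerate case is split off.
        obtain rfl | hne := eq_or_ne y₂ y₁
        · simp [p₁', p₂']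
        have hL : 0 ≤ L := nonneg_of_mul_nonneg_left
          ((norm_nonneg _).trans (hDF_lip y₁ hy₁ y₂ hy₂)) (norm_pos_iff.2 (sub_ne_zero.2 hne))
        gcongr
        exact WithLp.norm_fst_le _ (p₂' - p₁')

/-- Distance from a graph point to the affine tangent space of the graph at another point,
for a `C¹` map with `L`-Lipschitz derivative. -/
theorem dist_graph_point_to_affine_tangent (n d : ℕ) (L : ℝ)
    (U : Set (EuclideanSpace ℝ (Fin n))) (hU : IsOpen U) (hUconv : Convex ℝ U)
    (F : EuclideanSpace ℝ (Fin n) → EuclideanSpace ℝ (Fin (d - n)))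
    (hF : ContDiffOn ℝ 1 F U)
    (hDF_lip : ∀ y₁ ∈ U, ∀ y₂ ∈ U,
      ‖fderivWithin ℝ F U y₂ - fderivWithin ℝ F U y₁‖ ≤ L * ‖y₂ - y₁‖)
    (y₁ : EuclideanSpace ℝ (Fin n)) (hy₁ : y₁ ∈ U)
    (y₂ : EuclideanSpace ℝ (Fin n)) (hy₂ : y₂ ∈ U) :
    letI P := WithLp 2 (EuclideanSpace ℝ (Fin n) × EuclideanSpace ℝ (Fin (d - n)))
    let e := (WithLp.equiv 2 (EuclideanSpace ℝ (Fin n) × EuclideanSpace ℝ (Fin (d - n)))).symm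
    let p₁' : P := e (y₁, F y₁)
    let p₂' : P := e (y₂, F y₂)
    let Tan : Set P := {z | ∃ v : EuclideanSpace ℝ (Fin n),
      z = p₁' + e (v, fderivWithin ℝ F U y₁ v)}
    infDist p₂' Tan ≤ L / 2 * ‖p₂' - p₁'‖ ^ 2 :=
  dist_graph_point_to_affine_tangent_general n d L U hUconv F hF hDF_lip y₁ hy₁ y₂ hy₂
end

section
/- Let g, g̃ : ℝⁿ → ℝ^{d−n} be differentiable maps and y ∈ ℝⁿ a point with ‖Dg(y) − Dg̃(y)‖_op ≤ δ for some δ < 1. Let T = {(v, Dg(y)v) : v ∈ ℝⁿ} and T̃ = {(v, Dg̃(y)v) : v ∈ ℝⁿ} be the tangent spaces of the respective graphs at y. Then for every nonzero u ∈ T there exists a nonzero w ∈ T̃ such that the angle between u and w is at most arcsin δ. -/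
/-!
Points `u = (v, Dg(y) v)` and `w = (v, Dg̃(y) v)` over the same `v` satisfy
`‖u - w‖ = ‖(Dg(y) - Dg̃(y)) v‖ ≤ δ ‖v‖ ≤ δ ‖u‖`. Any `w` in the ball of radius `δ ‖u‖` about `u`
lies in the cone of half-angle `arcsin δ` around `u`: expanding `‖u - w‖²` and applying AM-GM
gives `⟪u, w⟫ ≥ √(1 - δ²) ‖u‖ ‖w‖ = cos (arcsin δ) ‖u‖ ‖w‖`.
-/

open InnerProductGeometry Real

theorem ne_zero_of_norm_sub_lt_norm {E : Type*} [SeminormedAddGroup E] {u w : E}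
    (h : ‖u - w‖ < ‖u‖) : w ≠ 0 := by
  rintro rfl
  simp at h

section Angle

variable {V : Type*} [NormedAddCommGroup V] [InnerProductSpace ℝ V] {u w : V} {δ : ℝ}

theorem sqrt_one_sub_sq_mul_norm_mul_norm_le_inner (hδ : |δ| ≤ 1) (h : ‖u - w‖ ≤ δ * ‖u‖) :
    √(1 - δ ^ 2) * (‖u‖ * ‖w‖) ≤ inner ℝ u w := by
  have hsq : ‖u - w‖ ^ 2 ≤ (δ * ‖u‖) ^ 2 := pow_le_pow_left₀ (norm_nonneg _) h 2
  rw [norm_sub_sq_real] at hsq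
  have hc : √(1 - δ ^ 2) ^ 2 = 1 - δ ^ 2 :=
    sq_sqrt (sub_nonneg.2 (sq_le_one_iff_abs_le_one δ |>.2 hδ))
  nlinarith [sq_nonneg (√(1 - δ ^ 2) * ‖u‖ - ‖w‖)]

theorem angle_le_arcsin_of_norm_sub_le (hu : u ≠ 0) (hδ : δ < 1) (h : ‖u - w‖ ≤ δ * ‖u‖) :
    angle u w ≤ arcsin δ := by
  have hu' : 0 < ‖u‖ := norm_pos_iff.2 hu
  have hδ₀ : 0 ≤ δ := nonneg_of_mul_nonneg_left ((norm_nonneg _).trans h) hu'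
  have hw : w ≠ 0 := ne_zero_of_norm_sub_lt_norm (h.trans_lt (by nlinarith))
  rw [arcsin_eq_arccos hδ₀, angle]
  refine arccos_le_arccos ((le_div_iff₀ (mul_pos hu' (norm_pos_iff.2 hw))).2 ?_)
  exact sqrt_one_sub_sq_mul_norm_mul_norm_le_inner (abs_le.2 ⟨by linarith, hδ.le⟩) h

end Angle

theorem WithLp.norm_toLp_sub_toLp_le_opNorm_sub_mul {E F : Type*}
    [NormedAddCommGroup E] [NormedSpace ℝ E] [NormedAddCommGroup F] [NormedSpace ℝ F]
    (L M : E →L[ℝ] F) (v : E) :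
    ‖WithLp.toLp 2 (v, L v) - WithLp.toLp 2 (v, M v)‖ ≤ ‖L - M‖ * ‖WithLp.toLp 2 (v, L v)‖ := by
  rw [← WithLp.toLp_sub, Prod.mk_sub_mk, sub_self, WithLp.norm_toLp_snd, ← sub_apply]
  calc ‖(L - M) v‖ ≤ ‖L - M‖ * ‖v‖ := (L - M).le_opNorm v
    _ ≤ ‖L - M‖ * ‖WithLp.toLp 2 (v, L v)‖ := by
      gcongr
      exact WithLp.norm_fst_le E (WithLp.toLp 2 (v, L v))

theorem angle_tangent_spaces_of_close_derivatives_general (n d : ℕ) (δ : ℝ) (hδ : δ < 1)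
    (g g' : EuclideanSpace ℝ (Fin n) → EuclideanSpace ℝ (Fin (d - n)))
    (y : EuclideanSpace ℝ (Fin n))
    (hclose : ‖fderiv ℝ g y - fderiv ℝ g' y‖ ≤ δ) :
    let e := (WithLp.equiv 2 (EuclideanSpace ℝ (Fin n) × EuclideanSpace ℝ (Fin (d - n)))).symm
    let T : Set (WithLp 2 (EuclideanSpace ℝ (Fin n) × EuclideanSpace ℝ (Fin (d - n)))) :=
      {z | ∃ v : EuclideanSpace ℝ (Fin n), z = e (v, fderiv ℝ g y v)}
    let T' : Set (WithLp 2 (EuclideanSpace ℝ (Fin n) × EuclideanSpace ℝ (Fin (d - n)))) :=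
      {z | ∃ v : EuclideanSpace ℝ (Fin n), z = e (v, fderiv ℝ g' y v)}
    ∀ u ∈ T, u ≠ 0 → ∃ w ∈ T', w ≠ 0 ∧ angle u w ≤ Real.arcsin δ := by
  rintro e T T' u ⟨v, rfl⟩ hu
  have hclose' : ‖e (v, fderiv ℝ g y v) - e (v, fderiv ℝ g' y v)‖ ≤ δ * ‖e (v, fderiv ℝ g y v)‖ :=
    (WithLp.norm_toLp_sub_toLp_le_opNorm_sub_mul _ _ v).trans
      (mul_le_mul_of_nonneg_right hclose (norm_nonneg _))
  have hlt : δ * ‖e (v, fderiv ℝ g y v)‖ < ‖e (v, fderiv ℝ g y v)‖ :=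
    mul_lt_of_lt_one_left (norm_pos_iff.2 hu) hδ
  exact ⟨_, ⟨v, rfl⟩, ne_zero_of_norm_sub_lt_norm (hclose'.trans_lt hlt),
    angle_le_arcsin_of_norm_sub_le hu hδ hclose'⟩

/-- Tangent spaces of graphs of maps with `δ`-close derivatives at a point make an angle
at most `arcsin δ`. -/
theorem angle_tangent_spaces_of_close_derivatives (n d : ℕ) (δ : ℝ) (hδ : δ < 1)
    (g g' : EuclideanSpace ℝ (Fin n) → EuclideanSpace ℝ (Fin (d - n)))
    (hg : Differentiable ℝ g) (hg' : Differentiable ℝ g')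
    (y : EuclideanSpace ℝ (Fin n))
    (hclose : ‖fderiv ℝ g y - fderiv ℝ g' y‖ ≤ δ) :
    let e := (WithLp.equiv 2 (EuclideanSpace ℝ (Fin n) × EuclideanSpace ℝ (Fin (d - n)))).symm
    let T : Set (WithLp 2 (EuclideanSpace ℝ (Fin n) × EuclideanSpace ℝ (Fin (d - n)))) :=
      {z | ∃ v : EuclideanSpace ℝ (Fin n), z = e (v, fderiv ℝ g y v)}
    let T' : Set (WithLp 2 (EuclideanSpace ℝ (Fin n) × EuclideanSpace ℝ (Fin (d - n)))) :=
      {z | ∃ v : EuclideanSpace ℝ (Fin n), z = e (v, fderiv ℝ g' y v)}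
    ∀ u ∈ T, u ≠ 0 → ∃ w ∈ T', w ≠ 0 ∧ angle u w ≤ Real.arcsin δ :=
  angle_tangent_spaces_of_close_derivatives_general n d δ hδ g g' y hclose
end
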